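/- arXiv:1511.04010 — 3 statements merged into one kernel-verified Lean document; each statement's English description precedes it below -/
import Mathlib

section
/- Let p ∈ ℂ with Im(p) ≠ 0 and define A(q,p)² = (ℏ/(5−q))·(√(2(q+1))/|p|)·₂F₁(1/2, (5−q)/(2(q−1)); (3+q)/(2(q−1)); Re(p)²/|p|²) for q ∈ (1,5). Then lim_{q→1⁺} A(q,p)² = ℏ/(2|Im(p)|). -/
/-!
Since `(3 + q) / (2 (q - 1)) = b + 1` with `b = (5 - q) / (2 (q - 1))`, and `(b)ₙ / (b + 1)ₙ =
b / (b + n)`, the `n`-th term of `₂F₁(1/2, b; b + 1; t)` is that of the binomial series of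
`(1 - t)^(-1/2)` times `b / (b + n) ∈ [0, 1]`. As `q → 1⁺`, `b → ∞` and each of these factors tends
to `1`, so by dominated convergence the hypergeometric factor tends to
`(1 - t)^(-1/2) = ‖p‖ / |Im p|` for `t = (Re p)² / ‖p‖²`, while the prefactor tends to
`ℏ / 4 · 2 / ‖p‖`.
-/

open Complex Filter

/-- The Gauss hypergeometric function ₂F₁ as a power series. -/
noncomputable def hyp2F1 (a b c x : ℂ) : ℂ :=
  ∑' n : ℕ, (ascPochhammer ℂ n).eval a * (ascPochhammer ℂ n).eval b
    / ((ascPochhammer ℂ n).eval c * (n.factorial : ℂ)) * x ^ n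

/-- The squared norm `A(q,p)²` of the q-Gamow state. -/
noncomputable def Asq (ℏ : ℝ) (q : ℝ) (p : ℂ) : ℂ :=
  ((ℏ / (5 - q) : ℝ) : ℂ) * ((Real.sqrt (2 * (q + 1)) / ‖p‖ : ℝ) : ℂ) *
    hyp2F1 (1 / 2) (((5 - q) / (2 * (q - 1)) : ℝ) : ℂ) (((3 + q) / (2 * (q - 1)) : ℝ) : ℂ)
      ((p.re ^ 2 / ‖p‖ ^ 2 : ℝ) : ℂ)

open Polynomial Topology

theorem ascPochhammer_eval_mul_add_natCast {R : Type*} [CommSemiring R] (b : R) (n : ℕ) :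
    (ascPochhammer R n).eval b * (b + n) = b * (ascPochhammer R n).eval (b + 1) := by
  rw [← ascPochhammer_succ_eval, ascPochhammer_succ_left, eval_mul, eval_X, eval_comp,
    eval_add, eval_X, eval_one]

theorem hyp2F1_self_add_one_eq_tsum (a b x : ℂ) (hb : ∀ n : ℕ, b + n ≠ 0) :
    hyp2F1 a b (b + 1) x =
      ∑' n : ℕ, b / (b + n) * ((ascPochhammer ℂ n).eval a / n.factorial * x ^ n) := by
  refine tsum_congr fun n => ?_
  have hc : (ascPochhammer ℂ n).eval (b + 1) ≠ 0 := by
    rw [Ne, ascPochhammer_eval_eq_zero_iff]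
    rintro ⟨k, -, hk⟩
    exact hb (k + 1) (by push_cast; linear_combination hk)
  have hn : (n.factorial : ℂ) ≠ 0 := Nat.cast_ne_zero.mpr n.factorial_ne_zero
  have hbn := hb n
  field_simp
  linear_combination eval a (ascPochhammer ℂ n) * x ^ n * ascPochhammer_eval_mul_add_natCast b n

theorem hasFPowerSeriesOnBall_one_div_one_sub_cpow (a : ℂ) :
    HasFPowerSeriesOnBall (fun x => 1 / (1 - x) ^ a)
      (.ofScalars ℂ fun n => (ascPochhammer ℂ n).eval a / n.factorial) 0 1 := by
  have hcoef (n : ℕ) : Ring.choose (a + n - 1) n = (ascPochhammer ℂ n).eval a / n.factorial := by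
    rw [← Ring.multichoose_eq, eq_div_iff (Nat.cast_ne_zero.mpr n.factorial_ne_zero), mul_comm,
      ← nsmul_eq_mul, Ring.factorial_nsmul_multichoose_eq_ascPochhammer,
      ascPochhammer_smeval_eq_eval]
  simpa only [hcoef] using one_div_one_sub_cpow_hasFPowerSeriesOnBall_zero a

theorem tendsto_div_add_const_atTop (c : ℝ) : Tendsto (fun b : ℝ => b / (b + c)) atTop (𝓝 1) := by
  have h : Tendsto (fun b : ℝ => (1 + c * b⁻¹)⁻¹) atTop (𝓝 (1 + c * 0)⁻¹) :=
    ((tendsto_inv_atTop_zero.const_mul c).const_add 1).inv₀ (by simp)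
  rw [mul_zero, add_zero, inv_one] at h
  refine h.congr' ?_
  filter_upwards [eventually_gt_atTop 0] with b hb
  rw [← div_eq_mul_inv, one_add_div hb.ne', inv_div]

theorem tendsto_hyp2F1_self_add_one_atTop (a : ℂ) {x : ℂ} (hx : ‖x‖ < 1) :
    Tendsto (fun b : ℝ => hyp2F1 a b (b + 1) x) atTop (𝓝 (1 / (1 - x) ^ a)) := by
  have hP := hasFPowerSeriesOnBall_one_div_one_sub_cpow a
  have hxP : x ∈ Metric.eball (0 : ℂ) 1 := by simpa [← ofReal_norm] using hx
  have hsum := hP.hasSum hxP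
  have hnorm :=
    FormalMultilinearSeries.summable_norm_apply _ (Metric.eball_subset_eball hP.r_le hxP)
  simp only [FormalMultilinearSeries.ofScalars_apply_eq, zero_add, smul_eq_mul] at hsum hnorm
  rw [← hsum.tsum_eq]
  have hhyp : (fun b : ℝ => ∑' n : ℕ, (b : ℂ) / (b + n) *
      ((ascPochhammer ℂ n).eval a / n.factorial * x ^ n)) =ᶠ[atTop]
      fun b : ℝ => hyp2F1 a b (b + 1) x := by
    filter_upwards [eventually_gt_atTop 0] with b hb
    refine (hyp2F1_self_add_one_eq_tsum a b x fun n => ?_).symm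
    exact_mod_cast (by positivity : b + n ≠ 0)
  refine (tendsto_tsum_of_dominated_convergence hnorm (fun n => ?_) ?_).congr' hhyp
  · have h := (continuous_ofReal.tendsto 1).comp (tendsto_div_add_const_atTop n)
    simpa using h.mul_const ((ascPochhammer ℂ n).eval a / n.factorial * x ^ n)
  · filter_upwards [eventually_gt_atTop 0] with b hb n
    rw [norm_mul]
    refine mul_le_of_le_one_left (norm_nonneg _) ?_
    have hcast : (b : ℂ) / (b + n) = ((b / (b + n) : ℝ) : ℂ) := by push_cast; rfl
    rw [hcast, norm_real, Real.norm_of_nonneg (by positivity)]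
    exact div_le_one_of_le₀ (by simp) (by positivity)

theorem tendsto_five_sub_div_two_mul_sub_one_nhdsGT_one :
    Tendsto (fun q : ℝ => (5 - q) / (2 * (q - 1))) (𝓝[>] 1) atTop := by
  have hnum : Tendsto (fun q : ℝ => (5 - q) / 2) (𝓝[>] 1) (𝓝 2) :=
    tendsto_nhdsWithin_of_tendsto_nhds <|
      ((continuous_const.sub continuous_id).div_const 2).tendsto' 1 2 (by norm_num)
  have hden : Tendsto (fun q : ℝ => q - 1) (𝓝[>] 1) (𝓝[>] 0) := by
    refine tendsto_nhdsWithin_of_tendsto_nhds_of_eventually_within _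
      (((continuous_id.sub continuous_const).tendsto' (1 : ℝ) 0 (sub_self 1)).mono_left
        nhdsWithin_le_nhds) ?_
    filter_upwards [self_mem_nhdsWithin] with q hq
    exact sub_pos.mpr (Set.mem_Ioi.mp hq)
  refine (hnum.pos_mul_atTop two_pos hden.inv_tendsto_nhdsGT_zero).congr fun q => ?_
  rw [Pi.inv_apply, ← div_eq_mul_inv, div_div]

theorem Asq_eq_of_ne_one (ℏ : ℝ) {q : ℝ} (hq : q ≠ 1) (p : ℂ) :
    Asq ℏ q p = ((ℏ / (5 - q) * (√(2 * (q + 1)) / ‖p‖) : ℝ) : ℂ) *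
      hyp2F1 (1 / 2) (((5 - q) / (2 * (q - 1)) : ℝ) : ℂ) (((5 - q) / (2 * (q - 1)) : ℝ) + 1)
        ((p.re ^ 2 / ‖p‖ ^ 2 : ℝ) : ℂ) := by
  have hq1 : q - 1 ≠ 0 := sub_ne_zero.mpr hq
  rw [Asq, ofReal_mul, ← ofReal_one, ← ofReal_add]
  congr 4
  field_simp
  ring

theorem one_sub_re_sq_div_norm_sq {p : ℂ} (hp : p ≠ 0) :
    1 - p.re ^ 2 / ‖p‖ ^ 2 = (|p.im| / ‖p‖) ^ 2 := by
  have : 0 < ‖p‖ := norm_pos_iff.mpr hp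
  rw [div_pow, sq_abs, eq_div_iff (by positivity), sub_mul, div_mul_cancel₀ _ (by positivity),
    Complex.sq_norm, normSq_apply]
  ring

theorem norm_re_sq_div_norm_sq_lt_one {p : ℂ} (hp : p.im ≠ 0) :
    ‖((p.re ^ 2 / ‖p‖ ^ 2 : ℝ) : ℂ)‖ < 1 := by
  have hp0 : p ≠ 0 := ne_of_apply_ne im hp
  have h := one_sub_re_sq_div_norm_sq hp0
  have hpos : 0 < (|p.im| / ‖p‖) ^ 2 :=
    pow_pos (div_pos (abs_pos.mpr hp) (norm_pos_iff.mpr hp0)) 2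
  rw [norm_real, Real.norm_of_nonneg (by positivity)]
  linarith

theorem one_sub_re_sq_div_norm_sq_cpow_half {p : ℂ} (hp : p.im ≠ 0) :
    (1 - ((p.re ^ 2 / ‖p‖ ^ 2 : ℝ) : ℂ)) ^ (1 / 2 : ℂ) = ((|p.im| / ‖p‖ : ℝ) : ℂ) := by
  have hp0 : p ≠ 0 := ne_of_apply_ne im hp
  have hpos : 0 < |p.im| / ‖p‖ := div_pos (abs_pos.mpr hp) (norm_pos_iff.mpr hp0)
  rw [← ofReal_one, ← ofReal_sub, one_sub_re_sq_div_norm_sq hp0, ofReal_pow, ofReal_one,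
    one_div, sq_cpow_two_inv (by rwa [ofReal_re])]

theorem Asq_tendsto_general (p : ℂ) (hp : p.im ≠ 0) (ℏ : ℝ) :
    Tendsto (fun q : ℝ => Asq ℏ q p) (nhdsWithin 1 (Set.Ioi 1))
      (nhds ((ℏ / (2 * |p.im|) : ℝ) : ℂ)) := by
  have hprefactor : Tendsto (fun q : ℝ => ℏ / (5 - q) * (√(2 * (q + 1)) / ‖p‖)) (𝓝[>] 1)
      (𝓝 (ℏ / (5 - 1) * (√(2 * (1 + 1)) / ‖p‖))) :=
    tendsto_nhdsWithin_of_tendsto_nhds <| ContinuousAt.tendsto <| by fun_prop (disch := norm_num)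
  have hF := (tendsto_hyp2F1_self_add_one_atTop (1 / 2) (norm_re_sq_div_norm_sq_lt_one hp)).comp
    tendsto_five_sub_div_two_mul_sub_one_nhdsGT_one
  have hlim := ((continuous_ofReal.tendsto _).comp hprefactor).mul hF
  convert hlim.congr' ?_ using 2
  · have hsqrt : √(2 * (1 + 1) : ℝ) = 2 := by
      rw [show (2 * (1 + 1) : ℝ) = 2 ^ 2 by norm_num, Real.sqrt_sq zero_le_two]
    have hnorm : ‖p‖ ≠ 0 := norm_ne_zero_iff.mpr (ne_of_apply_ne im hp)
    have him : |p.im| ≠ 0 := abs_ne_zero.mpr hp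
    rw [one_sub_re_sq_div_norm_sq_cpow_half hp, hsqrt, ← ofReal_one, ← ofReal_div, ← ofReal_mul]
    congr 1
    field_simp
    norm_num
  · filter_upwards [self_mem_nhdsWithin] with q hq
    exact (Asq_eq_of_ne_one ℏ (ne_of_gt hq) p).symm

theorem Asq_tendsto (p : ℂ) (hp : p.im ≠ 0) (ℏ : ℝ) (hℏ : 0 < ℏ) :
    Tendsto (fun q : ℝ => Asq ℏ q p) (nhdsWithin 1 (Set.Ioi 1))
      (nhds ((ℏ / (2 * |p.im|) : ℝ) : ℂ)) :=
  Asq_tendsto_general p hp ℏ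
end

section
/- For the normalized Gamow state defined by φ_G(x) = √(2|Im(p)|/ℏ)·e^{ipx/ℏ} for x > 0 (Im(p) > 0) and 0 for x < 0, one has ⟨φ_G|(H|φ_G⟩) = p²/(2m) and (⟨φ_G|H)|φ_G⟩ = (p*)²/(2m), hence the symmetrized mean energy ⟨H⟩ = (p² + (p*)²)/(4m) = Re(p²)/(2m). -/
open MeasureTheory Complex
open scoped ComplexConjugate

/-!
With `k = i p / ℏ` the Gamow state is `ψ x = c e^{k x}` on `(0, ∞)`, decaying because
`Re k = -Im p / ℏ < 0`, and `ψ'' = k² ψ`. Hence `⟨ψ|Hψ⟩ = -(ℏ²/2m) k² ‖ψ‖² = p²/2m`, the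
normalization `|c|² = -2 Re k` being exactly `‖ψ‖² = ∫₀^∞ |c|² e^{2 Re k x} dx = 1`. The other
matrix element is the complex conjugate of the first, and `p² + conj p² = 2 Re p²`.
-/

lemma deriv_const_mul_cexp_mul_ofReal (c k : ℂ) :
    deriv (fun y : ℝ => c * exp (k * y)) = fun y : ℝ => c * k * exp (k * y) := by
  funext y
  have hphase : HasDerivAt (fun y : ℝ => k * y) k y := by
    simpa using ((hasDerivAt_id y).ofReal_comp).const_mul k
  rw [(hphase.cexp.const_mul c).deriv]
  ring

lemma deriv_deriv_const_mul_cexp_mul_ofReal (c k : ℂ) :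
    deriv (deriv (fun y : ℝ => c * exp (k * y))) = fun y : ℝ => c * k ^ 2 * exp (k * y) := by
  simp only [deriv_const_mul_cexp_mul_ofReal]
  ring_nf

lemma conj_cexp_mul_ofReal_mul_self (k : ℂ) (x : ℝ) :
    conj (exp (k * x)) * exp (k * x) = exp ((2 * k.re : ℝ) * x) := by
  rw [← exp_conj, ← exp_add, map_mul, conj_ofReal, ← add_mul, add_comm, add_conj]

lemma integral_Ioi_conj_cexp_mul_self {k : ℂ} (hk : k.re < 0) :
    ∫ x in Set.Ioi (0 : ℝ), conj (exp (k * x)) * exp (k * x) = -1 / (2 * k.re) := by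
  simp only [conj_cexp_mul_ofReal_mul_self]
  rw [integral_exp_mul_complex_Ioi (by simp; linarith)]
  push_cast
  simp

lemma integral_Ioi_conj_mul_const_mul_deriv_deriv {c k : ℂ} (A : ℂ) (hk : k.re < 0)
    (hc : normSq c = -2 * k.re) :
    ∫ x in Set.Ioi (0 : ℝ), conj (c * exp (k * x)) *
        (A * deriv (deriv (fun y : ℝ => c * exp (k * y))) x) = A * k ^ 2 := by
  have hintegrand : ∀ x : ℝ, conj (c * exp (k * x)) * (A * (c * k ^ 2 * exp (k * x)))
      = A * k ^ 2 * (conj c * c) * (conj (exp (k * x)) * exp (k * x)) := fun x => by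
    rw [map_mul]; ring
  simp only [deriv_deriv_const_mul_cexp_mul_ofReal, hintegrand]
  rw [integral_const_mul, integral_Ioi_conj_cexp_mul_self hk, ← normSq_eq_conj_mul_self, hc]
  have hk0 : (k.re : ℂ) ≠ 0 := ofReal_ne_zero.mpr hk.ne
  push_cast
  field_simp

lemma integral_Ioi_conj_const_mul_deriv_deriv_mul {c k : ℂ} (A : ℂ) (hk : k.re < 0)
    (hc : normSq c = -2 * k.re) :
    ∫ x in Set.Ioi (0 : ℝ), conj (A * deriv (deriv (fun y : ℝ => c * exp (k * y))) x) *
        (c * exp (k * x)) = conj (A * k ^ 2) := by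
  rw [← integral_Ioi_conj_mul_const_mul_deriv_deriv A hk hc, ← integral_conj]
  simp only [map_mul, conj_conj, mul_comm]

theorem gamow_mean_energy_general (p : ℂ) (hp : 0 < p.im) (ℏ m : ℝ) (hℏ : 0 < ℏ) :
    (∫ x in Set.Ioi (0:ℝ),
        (starRingEnd ℂ) ((Real.sqrt (2 * |p.im| / ℏ) : ℝ) * Complex.exp (Complex.I * p * x / ℏ)) *
          (-(ℏ ^ 2 / (2 * m) : ℂ) *
            deriv (deriv (fun y : ℝ =>
              ((Real.sqrt (2 * |p.im| / ℏ) : ℝ) : ℂ) * Complex.exp (Complex.I * p * y / ℏ))) x))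
      = p ^ 2 / (2 * m)
    ∧ (∫ x in Set.Ioi (0:ℝ),
        (starRingEnd ℂ) (-(ℏ ^ 2 / (2 * m) : ℂ) *
            deriv (deriv (fun y : ℝ =>
              ((Real.sqrt (2 * |p.im| / ℏ) : ℝ) : ℂ) * Complex.exp (Complex.I * p * y / ℏ))) x) *
          (((Real.sqrt (2 * |p.im| / ℏ) : ℝ) : ℂ) * Complex.exp (Complex.I * p * x / ℏ)))
      = ((starRingEnd ℂ) p) ^ 2 / (2 * m)
    ∧ (p ^ 2 + ((starRingEnd ℂ) p) ^ 2) / (4 * m) = (((p ^ 2).re / (2 * m) : ℝ) : ℂ) := by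
  simp only [mul_div_right_comm (I * p) _ (ℏ : ℂ)]
  have hℏ0 : (ℏ : ℂ) ≠ 0 := ofReal_ne_zero.mpr hℏ.ne'
  have hk : (I * p / ℏ).re = -p.im / ℏ := by simp [div_ofReal_re]
  have hdecay : (I * p / ℏ).re < 0 := by rw [hk]; exact div_neg_of_neg_of_pos (by linarith) hℏ
  have hnormalized : normSq (Real.sqrt (2 * |p.im| / ℏ) : ℂ) = -2 * (I * p / ℏ).re := by
    rw [normSq_ofReal, Real.mul_self_sqrt (by positivity), hk, abs_of_pos hp]
    ring
  have henergy : -(ℏ ^ 2 / (2 * m) : ℂ) * (I * p / ℏ) ^ 2 = p ^ 2 / (2 * m) := by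
    field_simp
    rw [I_sq]
    ring
  refine ⟨?_, ?_, ?_⟩
  · rw [integral_Ioi_conj_mul_const_mul_deriv_deriv _ hdecay hnormalized, henergy]
  · rw [integral_Ioi_conj_const_mul_deriv_deriv_mul _ hdecay hnormalized, henergy]
    simp [map_ofNat]
  · rw [← map_pow, add_conj]
    push_cast
    ring

theorem gamow_mean_energy (p : ℂ) (hp : 0 < p.im) (ℏ m : ℝ) (hℏ : 0 < ℏ) (hm : 0 < m) :
    (∫ x in Set.Ioi (0:ℝ),
        (starRingEnd ℂ) ((Real.sqrt (2 * |p.im| / ℏ) : ℝ) * Complex.exp (Complex.I * p * x / ℏ)) *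
          (-(ℏ ^ 2 / (2 * m) : ℂ) *
            deriv (deriv (fun y : ℝ =>
              ((Real.sqrt (2 * |p.im| / ℏ) : ℝ) : ℂ) * Complex.exp (Complex.I * p * y / ℏ))) x))
      = p ^ 2 / (2 * m)
    ∧ (∫ x in Set.Ioi (0:ℝ),
        (starRingEnd ℂ) (-(ℏ ^ 2 / (2 * m) : ℂ) *
            deriv (deriv (fun y : ℝ =>
              ((Real.sqrt (2 * |p.im| / ℏ) : ℝ) : ℂ) * Complex.exp (Complex.I * p * y / ℏ))) x) *
          (((Real.sqrt (2 * |p.im| / ℏ) : ℝ) : ℂ) * Complex.exp (Complex.I * p * x / ℏ)))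
      = ((starRingEnd ℂ) p) ^ 2 / (2 * m)
    ∧ (p ^ 2 + ((starRingEnd ℂ) p) ^ 2) / (4 * m) = (((p ^ 2).re / (2 * m) : ℝ) : ℂ) :=
  gamow_mean_energy_general p hp ℏ m hℏ
end

section
/- For p ∈ ℂ with Im(p) > 0 and ℏ > 0, for every x ≥ 0 the q-Gamow wavefunction satisfies the dominated convergence bound: there exist q₀ ∈ (1,2) and an integrable function g on [0,∞) such that for all q ∈ (1, q₀], |[1 − i(q−1)px/(ℏ√(2(q+1)))]^{2/(1−q)}| ≤ g(x), and pointwise lim_{q→1⁺}[1 − i(q−1)px/(ℏ√(2(q+1)))]^{2/(1−q)} = e^{ipx/ℏ}. -/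
/-!
The base has real part `1 + (q - 1) m` with `m = Im p · x / (ℏ √(2(q+1))) ≥ Im p · x / (ℏ √6)`.
Since the exponent `2 / (1 - q)` is negative, the modulus of the power is at most
`(1 + (q - 1) m) ^ (-2 / (q - 1))`, which Bernoulli's inequality bounds by `(1 + m) ^ (-2)`: an
integrable majorant independent of `q`. For the limit, write the base as `1 + ε a` with
`ε = (1 - q) / 2 → 0` and `a → i p x / ℏ`; then `(1 + ε a) ^ (1 / ε) → exp a` because
`log (1 + w) / w → 1`.
-/

open MeasureTheory Complex Filter

open Topology

theorem Complex.tendsto_one_add_mul_cpow_inv_exp {α : Type*} {l : Filter α} {ε a : α → ℂ}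
    {a₀ : ℂ} (hε : Tendsto ε l (𝓝[≠] 0)) (ha : Tendsto a l (𝓝 a₀)) :
    Tendsto (fun t ↦ (1 + ε t * a t) ^ (ε t)⁻¹) l (𝓝 (exp a₀)) := by
  -- `φ w = log (1 + w) / w`, extended by `1` at `0`, so that `log (1 + w) = w * φ w` for all `w`
  set φ := dslope (fun w : ℂ ↦ log (1 + w)) 0
  have hlog : HasDerivAt (fun w : ℂ ↦ log (1 + w)) 1 0 := by
    simpa using ((hasDerivAt_id (0 : ℂ)).const_add 1).clog (by simp)
  have hφ : Tendsto φ (𝓝 0) (𝓝 1) := by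
    have := (continuousAt_dslope_same.2 hlog.differentiableAt).tendsto
    rwa [dslope_same, hlog.deriv] at this
  have hw : Tendsto (fun t ↦ ε t * a t) l (𝓝 0) := by
    simpa using (tendsto_nhds_of_tendsto_nhdsWithin hε).mul ha
  have hexp := (continuous_exp.tendsto _).comp (ha.mul (hφ.comp hw))
  rw [mul_one] at hexp
  refine hexp.congr' ?_
  filter_upwards [hε.eventually eventually_mem_nhdsWithin,
    hw.eventually_ne (show (0 : ℂ) ≠ -1 by simp)] with t (hε0 : ε t ≠ 0) hw1
  have hbase : 1 + ε t * a t ≠ 0 := fun h ↦ hw1 (eq_neg_of_add_eq_zero_right h)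
  have hφt : log (1 + ε t * a t) = ε t * a t * φ (ε t * a t) := by
    simpa using (sub_smul_dslope (fun w : ℂ ↦ log (1 + w)) 0 (ε t * a t)).symm
  simp only [Function.comp_apply, cpow_def_of_ne_zero hbase, hφt]
  field_simp

theorem Complex.norm_cpow_ofReal_le_re_rpow {z : ℂ} (hz : 0 < z.re) {r : ℝ} (hr : r ≤ 0) :
    ‖z ^ (r : ℂ)‖ ≤ z.re ^ r := by
  rw [norm_cpow_real]
  exact Real.rpow_le_rpow_of_nonpos hz (re_le_norm z) hr

theorem Real.one_add_mul_rpow_neg_div_le {ε y k : ℝ} (hε : 0 < ε) (hε1 : ε ≤ 1) (hy : 0 ≤ y)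
    (hk : 0 ≤ k) : (1 + ε * y) ^ (-k / ε) ≤ (1 + y) ^ (-k) := by
  have hbernoulli : 1 + y ≤ (1 + ε * y) ^ ε⁻¹ := by
    simpa [hε.ne'] using
      one_add_mul_self_le_rpow_one_add (s := ε * y) (by nlinarith) ((one_le_inv₀ hε).2 hε1)
  rw [show -k / ε = ε⁻¹ * -k by ring, Real.rpow_mul (by positivity)]
  exact Real.rpow_le_rpow_of_nonpos (by positivity) hbernoulli (by linarith)

theorem integrable_one_add_norm_mul_rpow_neg {β r : ℝ} (hβ : β ≠ 0) (hr : 1 < r) :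
    Integrable (fun x : ℝ ↦ (1 + ‖β * x‖) ^ (-r)) :=
  (integrable_one_add_norm (E := ℝ) (μ := volume) (by simpa using hr)).comp_mul_left' hβ

noncomputable def qGamowBase (p : ℂ) (ℏ q x : ℝ) : ℂ :=
  1 - Complex.I * (q - 1) * p * x / (ℏ * Real.sqrt (2 * (q + 1)))

theorem qGamowBase_re (p : ℂ) (ℏ q x : ℝ) :
    (qGamowBase p ℏ q x).re = 1 + (q - 1) * (p.im * x / (ℏ * √(2 * (q + 1)))) := by
  have hbase : I * (q - 1) * p * x / (ℏ * √(2 * (q + 1)))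
      = (((q - 1) * x / (ℏ * √(2 * (q + 1))) : ℝ) : ℂ) * (I * p) := by
    push_cast
    ring
  rw [qGamowBase, hbase, sub_re, one_re, re_ofReal_mul, I_mul_re]
  ring

theorem norm_qGamowBase_cpow_le {p : ℂ} (hp : 0 ≤ p.im) {ℏ : ℝ} (hℏ : 0 < ℏ) {q x : ℝ}
    (hq : q ∈ Set.Ioc 1 2) (hx : 0 ≤ x) :
    ‖qGamowBase p ℏ q x ^ ((2 / (1 - q) : ℝ) : ℂ)‖ ≤ (1 + p.im / (ℏ * √6) * x) ^ (-2 : ℝ) := by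
  obtain ⟨hq1, hq2⟩ := hq
  have hs : 0 < √(2 * (q + 1)) := Real.sqrt_pos.2 (by linarith)
  set m := p.im * x / (ℏ * √(2 * (q + 1)))
  have hm : 0 ≤ m := by positivity
  have hβm : p.im / (ℏ * √6) * x ≤ m := by
    rw [div_mul_eq_mul_div]
    exact div_le_div_of_nonneg_left (by positivity) (by positivity)
      (mul_le_mul_of_nonneg_left (Real.sqrt_le_sqrt (by linarith)) hℏ.le)
  calc ‖qGamowBase p ℏ q x ^ ((2 / (1 - q) : ℝ) : ℂ)‖
      ≤ (1 + (q - 1) * m) ^ (2 / (1 - q)) := by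
        rw [← qGamowBase_re]
        refine norm_cpow_ofReal_le_re_rpow ?_ (div_nonpos_of_nonneg_of_nonpos zero_le_two ?_)
        · rw [qGamowBase_re]; positivity
        · linarith
    _ = (1 + (q - 1) * m) ^ (-2 / (q - 1)) := by
        rw [← neg_sub q 1, div_neg, neg_div]
    _ ≤ (1 + m) ^ (-2 : ℝ) :=
        Real.one_add_mul_rpow_neg_div_le (by linarith) (by linarith) hm zero_le_two
    _ ≤ (1 + p.im / (ℏ * √6) * x) ^ (-2 : ℝ) :=
        Real.rpow_le_rpow_of_nonpos (by positivity) (by linarith) (by norm_num)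

theorem tendsto_qGamowBase_cpow (p : ℂ) (ℏ x : ℝ) :
    Tendsto (fun q : ℝ ↦ qGamowBase p ℏ q x ^ ((2 / (1 - q) : ℝ) : ℂ)) (𝓝[>] 1)
      (𝓝 (exp (I * p * x / ℏ))) := by
  have hsqrt : Tendsto (fun q : ℝ ↦ ((√(2 * (q + 1)) : ℝ) : ℂ)) (𝓝[>] 1) (𝓝 2) := by
    have hcont : Continuous fun q : ℝ ↦ ((√(2 * (q + 1)) : ℝ) : ℂ) := by fun_prop
    have h4 : √(2 * ((1 : ℝ) + 1)) = 2 := by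
      rw [show 2 * ((1 : ℝ) + 1) = 2 ^ 2 by norm_num, Real.sqrt_sq zero_le_two]
    simpa [h4] using (hcont.tendsto 1).mono_left nhdsWithin_le_nhds
  have hε : Tendsto (fun q : ℝ ↦ (1 - (q : ℂ)) / 2) (𝓝[>] 1) (𝓝[≠] 0) := by
    refine tendsto_nhdsWithin_iff.2 ⟨?_, ?_⟩
    · have hcont : Continuous fun q : ℝ ↦ (1 - (q : ℂ)) / 2 := by fun_prop
      simpa using (hcont.tendsto 1).mono_left nhdsWithin_le_nhds
    · filter_upwards [self_mem_nhdsWithin] with q (hq : 1 < q)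
      exact div_ne_zero (sub_ne_zero.2 (mod_cast hq.ne)) two_ne_zero
  have ha : Tendsto (fun q : ℝ ↦ 2 * I * p * x / ℏ / ((√(2 * (q + 1)) : ℝ) : ℂ)) (𝓝[>] 1)
      (𝓝 (I * p * x / ℏ)) := by
    have := (tendsto_const_nhds (x := 2 * I * p * x / ℏ)).div hsqrt two_ne_zero
    rwa [show 2 * I * p * x / ℏ / 2 = I * p * x / ℏ by ring] at this
  refine (tendsto_one_add_mul_cpow_inv_exp hε ha).congr fun q ↦ ?_
  rw [qGamowBase]
  congr 1
  · ring
  · push_cast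
    rw [inv_div]

theorem qGamow_dominated_convergence (p : ℂ) (hp : 0 < p.im) (ℏ : ℝ) (hℏ : 0 < ℏ) :
    ∃ q₀ ∈ Set.Ioo (1:ℝ) 2, ∃ g : ℝ → ℝ, IntegrableOn g (Set.Ioi 0) ∧
      (∀ q ∈ Set.Ioc (1:ℝ) q₀, ∀ x : ℝ, 0 ≤ x →
        ‖((1 - Complex.I * (q - 1) * p * x / (ℏ * Real.sqrt (2 * (q + 1))))
          ^ ((2 / (1 - q) : ℝ) : ℂ))‖ ≤ g x) ∧
      (∀ x : ℝ, 0 ≤ x →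
        Tendsto (fun q : ℝ =>
            (1 - Complex.I * (q - 1) * p * x / (ℏ * Real.sqrt (2 * (q + 1))))
              ^ ((2 / (1 - q) : ℝ) : ℂ))
          (nhdsWithin 1 (Set.Ioi 1))
          (nhds (Complex.exp (Complex.I * p * x / ℏ)))) := by
  set β := p.im / (ℏ * √6)
  have hβ : 0 < β := by positivity
  refine ⟨3 / 2, by norm_num, fun x ↦ (1 + ‖β * x‖) ^ (-2 : ℝ),
    (integrable_one_add_norm_mul_rpow_neg hβ.ne' one_lt_two).integrableOn, ?_,
    fun x _ ↦ tendsto_qGamowBase_cpow p ℏ x⟩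
  rintro q ⟨hq1, hq⟩ x hx
  beta_reduce
  rw [Real.norm_of_nonneg (by positivity)]
  exact norm_qGamowBase_cpow_le hp.le hℏ ⟨hq1, by linarith⟩ hx
end
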